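/- Normalization of the bottom-up queue-jumping observation model: let r be a strict partial order on a finite type A with |A| = m ≥ 1, and let p ∈ [0,1]. For an enumeration Y : Fin m ≃ A define q_U(Y) = ∏_{j=1}^{m} ( p/j + (1 − p) · C̃_{Y_j}(r[{Y_1, …, Y_j}]) / C(r[{Y_1, …, Y_j}]) ). Then the sum of q_U(Y) over all m! enumerations Y of A equals 1. -/

import Mathlib

open scoped Classical

/-- `Y` is a linear extension of `r`: for positions `i < j`, the later element is never
above the earlier one. -/
def IsLinExt {A : Type*} {n : ℕ} (r : A → A → Prop) (Y : Fin n ≃ A) : Prop :=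
  ∀ i j : Fin n, i < j → ¬ r (Y j) (Y i)

/-- `C(r)`: the number of linear extensions of `r`. -/
noncomputable def numExt {A : Type*} [Fintype A] (r : A → A → Prop) : ℕ :=
  Nat.card {Y : Fin (Fintype.card A) ≃ A // IsLinExt r Y}

/-- `C̃_a(r)`: the number of linear extensions of `r` whose last entry is `a`. -/
noncomputable def numExtLast {A : Type*} [Fintype A] (r : A → A → Prop) (a : A) : ℕ :=
  Nat.card {Y : Fin (Fintype.card A) ≃ A //
    IsLinExt r Y ∧ ∀ i : Fin (Fintype.card A), (i : ℕ) = Fintype.card A - 1 → Y i = a}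

/-- The suborder `r[O]`: the restriction of `r` to the subset `O`. -/
def subrel {A : Type*} (r : A → A → Prop) (O : Set A) : O → O → Prop :=
  fun x y => r (x : A) (y : A)

/-!
Condition on the last entry `Y_m = a`. The prefixes `{Y_1, …, Y_j}` with `j < m` avoid `a`, so the
first `m - 1` factors of `q_U(Y)` are the factors of the same model for the enumeration
`(Y_1, …, Y_{m-1})` of `A \ {a}` under `r[A \ {a}]`; by induction they sum to `1`. What remains
is `∑_a (p / m + (1 - p) C̃_a(r) / C(r)) = p + (1 - p) = 1`, because every linear extension ends
in exactly one element and `C(r) ≥ 1`.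
-/

section LinearExtensions

variable {α β : Type*} [Fintype α] [Fintype β] {r : α → α → Prop} {s : β → β → Prop}

theorem isLinExt_relIso_iff (e : r ≃r s) (h : Fintype.card α = Fintype.card β)
    (Y : Fin (Fintype.card α) ≃ α) :
    IsLinExt s ((finCongr h).equivCongr e.toEquiv Y) ↔ IsLinExt r Y := by
  refine ⟨fun hY i j hij hr => hY (finCongr h i) (finCongr h j) hij ?_,
    fun hY i j hij hr => hY ((finCongr h).symm i) ((finCongr h).symm j) hij ?_⟩
  · simpa using e.map_rel_iff.mpr hr
  · simpa using e.map_rel_iff.mp hr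

theorem numExt_congr (e : r ≃r s) : numExt r = numExt s := by
  have h := Fintype.card_congr e.toEquiv
  exact Nat.card_congr <| .subtypeEquiv ((finCongr h).equivCongr e.toEquiv)
    fun Y => (isLinExt_relIso_iff e h Y).symm

theorem numExtLast_congr (e : r ≃r s) (a : α) : numExtLast r a = numExtLast s (e a) := by
  have h := Fintype.card_congr e.toEquiv
  refine Nat.card_congr <| .subtypeEquiv ((finCongr h).equivCongr e.toEquiv)
    fun Y => and_congr (isLinExt_relIso_iff e h Y).symm ?_
  simp only [Equiv.equivCongr_apply_apply, finCongr_symm, RelIso.coe_fn_toEquiv,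
    EmbeddingLike.apply_eq_iff_eq]
  exact ⟨fun hY i hi => hY _ (by simp [hi, h]), fun hY i hi => by
    simpa using hY (Fin.cast h i) (by simp [hi, h])⟩

variable (r)

theorem numExt_pos [IsStrictOrder α r] : 0 < numExt r := by
  let := partialOrderOfSO r
  let _ : Fintype (LinearExtension α) := ‹Fintype α›
  let Y := monoEquivOfFin (LinearExtension α) rfl
  have hY : IsLinExt r Y.toEquiv := fun i j hij hr => by
    have hle : toLinearExtension (α := α) (Y j) ≤ toLinearExtension (α := α) (Y i) :=
      toLinearExtension.monotone (Or.inr hr)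
    exact (Y.strictMono hij).not_ge hle
  exact Nat.card_pos_iff.mpr ⟨⟨⟨_, hY⟩⟩, inferInstance⟩

theorem sum_numExtLast [Nonempty α] : ∑ a, numExtLast r a = numExt r := by
  have hpos : 0 < Fintype.card α := Fintype.card_pos
  let last : Fin (Fintype.card α) := ⟨Fintype.card α - 1, by omega⟩
  have hlast (Y : Fin (Fintype.card α) ≃ α) (a : α) :
      (∀ i : Fin (Fintype.card α), (i : ℕ) = Fintype.card α - 1 → Y i = a) ↔ Y last = a :=
    ⟨fun h => h last rfl, fun h i hi => (Fin.ext hi : i = last) ▸ h⟩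
  simp only [numExt, numExtLast, hlast, Nat.card_eq_fintype_card, Fintype.card_subtype,
    ← Finset.filter_filter]
  exact (Finset.card_eq_sum_card_fiberwise fun _ _ => Finset.mem_univ _).symm

end LinearExtensions

section Enumerations

variable (A : Type*) [DecidableEq A] (n : ℕ)

def snocEquiv :
    (Σ a : A, Fin n ≃ {b // b ≠ a}) ≃ (Fin (n + 1) ≃ A) :=
  ((Equiv.sigmaCongrRight fun a => (Equiv.optionSubtype a).symm).trans
    (Equiv.sigmaFiberEquiv fun e : Option (Fin n) ≃ A => e none)).trans
    (finSuccEquivLast.equivCongr (Equiv.refl A)).symm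

variable {A n}

@[simp]
theorem snocEquiv_apply_last (x : Σ a : A, Fin n ≃ {b // b ≠ a}) :
    snocEquiv A n x (Fin.last n) = x.1 := by
  simp [snocEquiv]

@[simp]
theorem snocEquiv_apply_castSucc (x : Σ a : A, Fin n ≃ {b // b ≠ a}) (i : Fin n) :
    snocEquiv A n x i.castSucc = x.2 i := by
  simp [snocEquiv]

theorem prefix_snocEquiv_castSucc (a : A) (Z : Fin n ≃ {b // b ≠ a}) (j : Fin n) :
    {b | ∃ i, i ≤ j.castSucc ∧ snocEquiv A n ⟨a, Z⟩ i = b} =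
      Subtype.val '' {z | ∃ i, i ≤ j ∧ Z i = z} := by
  change _ '' Set.Iic _ = Subtype.val '' (Z '' Set.Iic j)
  rw [← Fin.image_castSucc_Iic, Set.image_image, Set.image_image]
  simp

end Enumerations

section Suborders

variable {α : Type*} (r : α → α → Prop)

def subrelCongr {S T : Set α} (h : S = T) : subrel r S ≃r subrel r T :=
  ⟨Equiv.setCongr h, Iff.rfl⟩

def subrelUniv {S : Set α} (h : S = Set.univ) : subrel r S ≃r r :=
  ⟨(Equiv.setCongr h).trans (Equiv.Set.univ α), Iff.rfl⟩

noncomputable def subrelSubrel (P : α → Prop) (S : Set (Subtype P)) :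
    subrel (Subrel r P) S ≃r subrel r (Subtype.val '' S) :=
  ⟨Equiv.Set.image _ S Subtype.val_injective, Iff.rfl⟩

end Suborders

section QueueJumping

variable {A : Type*} [Fintype A] (r : A → A → Prop) (p : ℝ)

/-- The chance that the model picks `a` as the last entry: uniformly with probability `p`,
otherwise proportionally to `C̃_a(r)`. -/
noncomputable def lastEntryProb (a : A) : ℝ :=
  p / Fintype.card A + (1 - p) * numExtLast r a / numExt r

/-- The `j`-th factor of `q_U(Y)`. The `DecidableEq A` binder makes the `Fintype` instances of the
prefix subtypes the ones elaborated in the statement. -/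
noncomputable def queueJumpFactor [DecidableEq A] {m : ℕ} (Y : Fin m ≃ A) (j : Fin m) : ℝ :=
  p / (((j : ℕ) + 1 : ℕ) : ℝ) +
    (1 - p) * ((numExtLast (subrel r {a : A | ∃ i : Fin m, i ≤ j ∧ Y i = a})
      ⟨Y j, ⟨j, le_refl j, rfl⟩⟩ : ℕ) : ℝ) /
      ((numExt (subrel r {a : A | ∃ i : Fin m, i ≤ j ∧ Y i = a}) : ℕ) : ℝ)

theorem sum_lastEntryProb [Nonempty A] [IsStrictOrder A r] : ∑ a, lastEntryProb r p a = 1 := by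
  have hC : (numExt r : ℝ) ≠ 0 := Nat.cast_ne_zero.mpr (numExt_pos r).ne'
  have hn : (Fintype.card A : ℝ) ≠ 0 := Nat.cast_ne_zero.mpr Fintype.card_ne_zero
  simp only [lastEntryProb, Finset.sum_add_distrib, ← Finset.sum_div, ← Finset.mul_sum,
    ← Nat.cast_sum, sum_numExtLast, Finset.sum_const, Finset.card_univ, nsmul_eq_mul]
  field_simp
  ring

theorem queueJumpFactor_last [DecidableEq A] {n : ℕ} (Y : Fin (n + 1) ≃ A)
    (hcard : Fintype.card A = n + 1) :
    queueJumpFactor r p Y (Fin.last n) = lastEntryProb r p (Y (Fin.last n)) := by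
  have hS : {a | ∃ i, i ≤ Fin.last n ∧ Y i = a} = Set.univ :=
    Set.eq_univ_of_forall fun a => ⟨Y.symm a, Fin.le_last _, Y.apply_symm_apply a⟩
  rw [queueJumpFactor, lastEntryProb, numExt_congr (subrelUniv r hS),
    numExtLast_congr (subrelUniv r hS), hcard]
  rfl

theorem queueJumpFactor_snocEquiv_castSucc [DecidableEq A] {n : ℕ} (a : A)
    (Z : Fin n ≃ {b // b ≠ a}) (j : Fin n) :
    queueJumpFactor r p (snocEquiv A n ⟨a, Z⟩) j.castSucc =
      queueJumpFactor (Subrel r (· ≠ a)) p Z j := by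
  let e := (subrelCongr r (prefix_snocEquiv_castSucc a Z j)).trans
    (subrelSubrel r (· ≠ a) _).symm
  have he : e ⟨_, j.castSucc, le_rfl, rfl⟩ = ⟨Z j, j, le_rfl, rfl⟩ :=
    e.symm.injective <| Subtype.ext <| by
      simp only [RelIso.symm_apply_apply, snocEquiv_apply_castSucc]; rfl
  rw [queueJumpFactor, queueJumpFactor, numExt_congr e, numExtLast_congr e, he, Fin.val_castSucc]

end QueueJumping

theorem sum_prod_queueJumpFactor {A : Type*} [Fintype A] [DecidableEq A] (r : A → A → Prop)
    [IsStrictOrder A r] (p : ℝ) {m : ℕ} (hcard : Fintype.card A = m) :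
    ∑ Y : Fin m ≃ A, ∏ j, queueJumpFactor r p Y j = 1 := by
  induction m generalizing A with
  | zero =>
    have : IsEmpty A := Fintype.card_eq_zero_iff.mp hcard
    have : Unique (Fin 0 ≃ A) := uniqueOfSubsingleton (Equiv.equivOfIsEmpty _ _)
    simp
  | succ n ih =>
    have : Nonempty A := Fintype.card_pos_iff.mp (by omega)
    have hcard_ne (a : A) : Fintype.card {b // b ≠ a} = n := by
      simp [Fintype.card_subtype_compl, hcard]
    calc ∑ Y, ∏ j, queueJumpFactor r p Y j
        = ∑ a, ∑ Z, ∏ j, queueJumpFactor r p (snocEquiv A n ⟨a, Z⟩) j := by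
          rw [← (snocEquiv A n).sum_comp, Fintype.sum_sigma]
      _ = ∑ a, ∑ Z : Fin n ≃ {b // b ≠ a},
            (∏ j, queueJumpFactor (Subrel r (· ≠ a)) p Z j) * lastEntryProb r p a := by
          simp only [Fin.prod_univ_castSucc, queueJumpFactor_snocEquiv_castSucc,
            queueJumpFactor_last r p _ hcard, snocEquiv_apply_last]
      _ = ∑ a, lastEntryProb r p a := by
          simp only [← Finset.sum_mul, ih _ (hcard_ne _), one_mul]
      _ = 1 := sum_lastEntryProb r p

theorem stmt10_general {A : Type*} [Fintype A] [DecidableEq A] (m : ℕ)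
    (hcard : Fintype.card A = m)
    (r : A → A → Prop) (hirr : Irreflexive r) (htrans : Transitive r)
    (p : ℝ) :
    ∑ Y : Fin m ≃ A, ∏ j : Fin m,
      (p / (((j : ℕ) + 1 : ℕ) : ℝ) +
        (1 - p) *
          ((numExtLast (subrel r {a : A | ∃ i : Fin m, i ≤ j ∧ Y i = a})
              ⟨Y j, ⟨j, le_refl j, rfl⟩⟩ : ℕ) : ℝ) /
            ((numExt (subrel r {a : A | ∃ i : Fin m, i ≤ j ∧ Y i = a}) : ℕ) : ℝ)) = 1 :=
  have : IsStrictOrder A r := { irrefl := hirr, trans := fun _ _ _ => @htrans _ _ _ }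
  sum_prod_queueJumpFactor r p hcard

/-- Normalization of the bottom-up queue-jumping observation model: the probabilities
`q_U(Y)` sum to `1` over all `m!` enumerations `Y` of `A`. -/
theorem stmt10 {A : Type*} [Fintype A] [DecidableEq A] (m : ℕ) (hm : 1 ≤ m)
    (hcard : Fintype.card A = m)
    (r : A → A → Prop) (hirr : Irreflexive r) (htrans : Transitive r)
    (p : ℝ) (hp0 : 0 ≤ p) (hp1 : p ≤ 1) :
    ∑ Y : Fin m ≃ A, ∏ j : Fin m,
      (p / (((j : ℕ) + 1 : ℕ) : ℝ) +
        (1 - p) *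
          ((numExtLast (subrel r {a : A | ∃ i : Fin m, i ≤ j ∧ Y i = a})
              ⟨Y j, ⟨j, le_refl j, rfl⟩⟩ : ℕ) : ℝ) /
            ((numExt (subrel r {a : A | ∃ i : Fin m, i ≤ j ∧ Y i = a}) : ℕ) : ℝ)) = 1 :=
  stmt10_general m hcard r hirr htrans p
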